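/- With P uniform on the annulus-with-offset-hole region S₁ \ S₂ as above and ABS at height h above C, the 3-D distance Z_c = √(|P − C|² + h²) from P to the ABS has density f(z) = 2z/(R₁² − R₂²) for √(R₂² + h²) ≤ z ≤ √((R₁ − d)² + h²), and f(z) = (2z/(π(R₁² − R₂²))) · arcsec(2d√(z² − h²)/(d² + z² − h² − R₁²)) for √((R₁ − d)² + h²) < z ≤ √((R₁ + d)² + h²). -/

import Mathlib

/-!
Compare distribution functions. In polar coordinates `(ρ, θ)` about `C = (d, 0)`, the circle of
radius `ρ` meets `S₁` in the arc `|θ| ≥ π - ω̂(ρ)`, where by the law of cosines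
`cos ω̂(ρ) = (d² + ρ² - R₁²)/(2dρ)`; so the area of `{p ∈ S₁ \ S₂ | |p - C| ≤ r}` is
`∫_{R₂}^{r} 2ρ ω̂(ρ) dρ`. The substitution `z = √(ρ² + h²)` turns this into the integral of the
claimed density up to `√(r² + h²)`, times `π(R₁² - R₂²)`. The first branch of the density is the
range `ρ ≤ R₁ - d`, where the whole circle lies in `S₁` and `ω̂ = π`.
-/

open MeasureTheory Set Real ProbabilityTheory

theorem volume_eq_lintegral_polar (c : ℝ × ℝ) {T : Set (ℝ × ℝ)} (hT : MeasurableSet T) :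
    volume T = ∫⁻ ρ in Ioi 0, ENNReal.ofReal ρ *
      volume ({θ | c + (ρ * cos θ, ρ * sin θ) ∈ T} ∩ Ioo (-π) π) := by
  have hT' : MeasurableSet ((c + ·) ⁻¹' T) := hT.preimage (by fun_prop)
  rw [← measure_preimage_add volume c T, ← lintegral_indicator_one hT',
    ← lintegral_comp_polarCoord_symm, polarCoord_target, Measure.volume_eq_prod,
    ← Measure.prod_restrict, lintegral_prod _ (by fun_prop)]
  refine setLIntegral_congr_fun measurableSet_Ioi fun ρ _ => ?_
  have hS : MeasurableSet {θ | c + (ρ * cos θ, ρ * sin θ) ∈ T} := hT.preimage (by fun_prop)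
  simp only [smul_eq_mul]
  rw [lintegral_const_mul' _ _ ENNReal.ofReal_ne_top, ← Measure.restrict_apply hS,
    ← lintegral_indicator_one hS]
  rfl

theorem volume_disk (c : ℝ × ℝ) {R : ℝ} (hR : 0 ≤ R) :
    volume {p : ℝ × ℝ | (p.1 - c.1) ^ 2 + (p.2 - c.2) ^ 2 ≤ R ^ 2}
      = ENNReal.ofReal (π * R ^ 2) := by
  have hball : {p : ℝ × ℝ | (p.1 - c.1) ^ 2 + (p.2 - c.2) ^ 2 ≤ R ^ 2}
      = Complex.measurableEquivRealProd.symm ⁻¹'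
          Metric.closedBall (Complex.equivRealProd.symm c) R := by
    ext p
    simp [Complex.dist_eq_re_im, sqrt_le_left hR]
  rw [hball, Complex.volume_preserving_equiv_real_prod.symm.measure_preimage
    measurableSet_closedBall.nullMeasurableSet, Complex.volume_closedBall,
    ENNReal.ofReal_mul pi_pos.le, ENNReal.ofReal_pow hR, mul_comm, ← ENNReal.ofReal_coe_nnreal,
    NNReal.coe_real_pi]

theorem lt_arccos_iff_lt_cos {θ u : ℝ} (hθ : θ ∈ Ico 0 π) : θ < arccos u ↔ u < cos θ := by
  rw [arccos, lt_sub_comm, arcsin_lt_iff_lt_sin' ⟨by linarith [hθ.2], by linarith [hθ.1]⟩,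
    sin_pi_div_two_sub]

theorem setOf_lt_cos_inter_Ioo (u : ℝ) :
    {θ | u < cos θ} ∩ Ioo (-π) π = Ioo (-arccos u) (arccos u) := by
  ext θ
  simp only [mem_inter_iff, mem_ofPred_eq, mem_Ioo, ← abs_lt, ← cos_abs θ]
  constructor
  · rintro ⟨hu, hθ⟩
    exact (lt_arccos_iff_lt_cos ⟨abs_nonneg θ, hθ⟩).2 hu
  · intro hθ
    have hθπ : |θ| < π := hθ.trans_le (arccos_le_pi u)
    exact ⟨(lt_arccos_iff_lt_cos ⟨abs_nonneg θ, hθπ⟩).1 hθ, hθπ⟩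

theorem volume_setOf_cos_le_neg_inter_Ioo (u : ℝ) :
    volume ({θ | cos θ ≤ -u} ∩ Ioo (-π) π) = ENNReal.ofReal (2 * arccos u) := by
  have hsub : Ioo (-arccos (-u)) (arccos (-u)) ⊆ Ioo (-π) π :=
    Ioo_subset_Ioo (neg_le_neg (arccos_le_pi _)) (arccos_le_pi _)
  have hdiff : {θ | cos θ ≤ -u} ∩ Ioo (-π) π = Ioo (-π) π \ Ioo (-arccos (-u)) (arccos (-u)) := by
    rw [← setOf_lt_cos_inter_Ioo, sdiff_inter_self_eq_sdiff]
    ext θ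
    simp only [mem_inter_iff, mem_sdiff, mem_ofPred_eq, not_lt, and_comm]
  rw [hdiff, measure_sdiff hsub measurableSet_Ioo.nullMeasurableSet measure_Ioo_lt_top.ne,
    volume_Ioo, volume_Ioo, ← ENNReal.ofReal_sub _ (by linarith [arccos_nonneg (-u)]),
    arccos_neg]
  ring_nf

/-- The paper's `ω̂`: the circle of radius `ρ` about `(d, 0)` meets the disk of radius `R` about
the origin in an arc of angular width `2 * arcHalfAngle R d ρ` (law of cosines). Because `arccos`
is clamped outside `[-1, 1]`, this is `π` for circles inside the disk and `0` for circles outside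
it. -/
noncomputable def arcHalfAngle (R d ρ : ℝ) : ℝ := arccos ((d ^ 2 + ρ ^ 2 - R ^ 2) / (2 * d * ρ))

theorem arcHalfAngle_eq_pi {R d ρ : ℝ} (hd : 0 < d) (hρ : 0 < ρ) (h : ρ + d ≤ R) :
    arcHalfAngle R d ρ = π := by
  rw [arcHalfAngle, arccos_eq_pi, div_le_iff₀ (by positivity)]
  nlinarith

theorem arcHalfAngle_eq_zero {R d ρ : ℝ} (hd : 0 < d) (hρ : 0 < ρ) (hR : 0 ≤ R) (h : R + d ≤ ρ) :
    arcHalfAngle R d ρ = 0 := by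
  rw [arcHalfAngle, arccos_eq_zero, le_div_iff₀ (by positivity)]
  nlinarith

theorem volume_angles_mem_disk {R d ρ : ℝ} (hd : 0 < d) (hρ : 0 < ρ) :
    volume ({θ | (d + ρ * cos θ) ^ 2 + (ρ * sin θ) ^ 2 ≤ R ^ 2} ∩ Ioo (-π) π)
      = ENNReal.ofReal (2 * arcHalfAngle R d ρ) := by
  have hset : {θ | (d + ρ * cos θ) ^ 2 + (ρ * sin θ) ^ 2 ≤ R ^ 2}
      = {θ | cos θ ≤ -((d ^ 2 + ρ ^ 2 - R ^ 2) / (2 * d * ρ))} := by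
    ext θ
    have hcircle : (d + ρ * cos θ) ^ 2 + (ρ * sin θ) ^ 2 = d ^ 2 + ρ ^ 2 + 2 * d * ρ * cos θ := by
      linear_combination ρ ^ 2 * sin_sq_add_cos_sq θ
    rw [mem_ofPred_eq, mem_ofPred_eq, hcircle, ← neg_div, le_div_iff₀ (by positivity)]
    constructor <;> intro h <;> linarith
  rw [hset, volume_setOf_cos_le_neg_inter_Ioo, arcHalfAngle]

theorem volume_annulus_inter_disk {R d s r : ℝ} (hd : 0 < d) (hs : 0 ≤ s) (hr : 0 ≤ r) :
    volume {p : ℝ × ℝ | s ^ 2 < (p.1 - d) ^ 2 + p.2 ^ 2 ∧ (p.1 - d) ^ 2 + p.2 ^ 2 ≤ r ^ 2 ∧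
        p.1 ^ 2 + p.2 ^ 2 ≤ R ^ 2}
      = ∫⁻ ρ in Ioc s r, ENNReal.ofReal (2 * ρ * arcHalfAngle R d ρ) := by
  rw [volume_eq_lintegral_polar (d, 0) (by measurability),
    ← inter_eq_left.2 (Ioc_subset_Ioi_self.trans (Ioi_subset_Ioi hs)),
    ← Measure.restrict_restrict measurableSet_Ioc, ← lintegral_indicator measurableSet_Ioc]
  refine setLIntegral_congr_fun measurableSet_Ioi fun ρ (hρ : 0 < ρ) => ?_
  have hmem (θ : ℝ) : (d, (0 : ℝ)) + (ρ * cos θ, ρ * sin θ) ∈ {p : ℝ × ℝ |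
      s ^ 2 < (p.1 - d) ^ 2 + p.2 ^ 2 ∧ (p.1 - d) ^ 2 + p.2 ^ 2 ≤ r ^ 2 ∧ p.1 ^ 2 + p.2 ^ 2 ≤ R ^ 2}
      ↔ ρ ∈ Ioc s r ∧ (d + ρ * cos θ) ^ 2 + (ρ * sin θ) ^ 2 ≤ R ^ 2 := by
    have hρ2 : (ρ * cos θ) ^ 2 + (ρ * sin θ) ^ 2 = ρ ^ 2 := by
      linear_combination ρ ^ 2 * cos_sq_add_sin_sq θ
    simp [hρ2, and_assoc, sq_lt_sq₀ hs hρ.le, sq_le_sq₀ hρ.le hr]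
  simp only [hmem]
  by_cases hρsr : ρ ∈ Ioc s r
  · simp only [hρsr, true_and, indicator_of_mem, volume_angles_mem_disk hd hρ]
    rw [← ENNReal.ofReal_mul hρ.le, mul_assoc, mul_left_comm]
  · simp [hρsr]

theorem strictMonoOn_sqrt_sq_add_sq (h : ℝ) :
    StrictMonoOn (fun ρ : ℝ => √(ρ ^ 2 + h ^ 2)) (Ici 0) :=
  fun _ hx _ _ hxy => sqrt_lt_sqrt (by positivity) (by nlinarith [mem_Ici.1 hx])

theorem hasDerivAt_sqrt_sq_add_sq {ρ : ℝ} (h : ℝ) (hρ : 0 < ρ) :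
    HasDerivAt (fun ρ : ℝ => √(ρ ^ 2 + h ^ 2)) (ρ / √(ρ ^ 2 + h ^ 2)) ρ := by
  convert ((hasDerivAt_pow 2 ρ).add_const (h ^ 2)).sqrt (by positivity) using 1
  field_simp
  ring

theorem lintegral_Ioc_sqrt_sq_add_sq {s r : ℝ} (hs : 0 ≤ s) (hsr : s ≤ r) (h : ℝ)
    (g : ℝ → ENNReal) :
    ∫⁻ z in Ioc √(s ^ 2 + h ^ 2) √(r ^ 2 + h ^ 2), g z
      = ∫⁻ ρ in Ioc s r, ENNReal.ofReal (ρ / √(ρ ^ 2 + h ^ 2)) * g √(ρ ^ 2 + h ^ 2) := by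
  have hmono : StrictMonoOn (fun ρ : ℝ => √(ρ ^ 2 + h ^ 2)) (Icc s r) :=
    (strictMonoOn_sqrt_sq_add_sq h).mono fun ρ hρ => hs.trans hρ.1
  rw [← ContinuousOn.image_Ioc_of_strictMonoOn hsr (by fun_prop) hmono,
    lintegral_image_eq_lintegral_abs_deriv_mul measurableSet_Ioc
      (fun ρ hρ => (hasDerivAt_sqrt_sq_add_sq h (hs.trans_lt hρ.1)).hasDerivWithinAt)
      (hmono.mono Ioc_subset_Icc_self).injOn]
  refine setLIntegral_congr_fun measurableSet_Ioc fun ρ hρ => ?_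
  rw [abs_of_nonneg (by have := hs.trans_lt hρ.1; positivity)]

noncomputable def zcDensity (R₁ R₂ d h z : ℝ) : ℝ :=
  if √(R₂ ^ 2 + h ^ 2) ≤ z ∧ z ≤ √((R₁ - d) ^ 2 + h ^ 2) then
    2 * z / (R₁ ^ 2 - R₂ ^ 2)
  else if √((R₁ - d) ^ 2 + h ^ 2) < z ∧ z ≤ √((R₁ + d) ^ 2 + h ^ 2) then
    2 * z / (π * (R₁ ^ 2 - R₂ ^ 2)) *
      arccos ((d ^ 2 + z ^ 2 - h ^ 2 - R₁ ^ 2) / (2 * d * √(z ^ 2 - h ^ 2)))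
  else 0

theorem sqrt_sq_add_sq_le_sqrt_sq_add_sq_iff {x y : ℝ} (h : ℝ) (hx : 0 ≤ x) (hy : 0 ≤ y) :
    √(x ^ 2 + h ^ 2) ≤ √(y ^ 2 + h ^ 2) ↔ x ≤ y := by
  rw [sqrt_le_sqrt_iff (by positivity), add_le_add_iff_right, sq_le_sq₀ hx hy]

theorem zcDensity_eq_zero_of_lt {R₁ R₂ d h z : ℝ} (hR₂ : 0 ≤ R₂) (hsub : R₂ + d ≤ R₁)
    (hz : z < √(R₂ ^ 2 + h ^ 2)) : zcDensity R₁ R₂ d h z = 0 := by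
  have hle : √(R₂ ^ 2 + h ^ 2) ≤ √((R₁ - d) ^ 2 + h ^ 2) :=
    (sqrt_sq_add_sq_le_sqrt_sq_add_sq_iff h hR₂ (by linarith)).2 (by linarith)
  rw [zcDensity, if_neg fun h => (hz.trans_le h.1).false,
    if_neg fun h => (hz.trans (hle.trans_lt h.1)).false]

theorem zcDensity_sqrt_sq_add_sq {R₁ R₂ d h ρ : ℝ} (hR₂ : 0 < R₂) (hd : 0 < d)
    (hsub : R₂ + d ≤ R₁) (hρ : R₂ ≤ ρ) :
    zcDensity R₁ R₂ d h √(ρ ^ 2 + h ^ 2)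
      = 2 * √(ρ ^ 2 + h ^ 2) / (π * (R₁ ^ 2 - R₂ ^ 2)) * arcHalfAngle R₁ d ρ := by
  have hρ0 : 0 < ρ := hR₂.trans_le hρ
  have hle {x y : ℝ} (hx : 0 ≤ x) (hy : 0 ≤ y) := sqrt_sq_add_sq_le_sqrt_sq_add_sq_iff h hx hy
  have harg : arccos ((d ^ 2 + √(ρ ^ 2 + h ^ 2) ^ 2 - h ^ 2 - R₁ ^ 2) /
      (2 * d * √(√(ρ ^ 2 + h ^ 2) ^ 2 - h ^ 2))) = arcHalfAngle R₁ d ρ := by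
    rw [sq_sqrt (by positivity), add_sub_cancel_right, sqrt_sq hρ0.le, arcHalfAngle]
    ring_nf
  rw [zcDensity, harg]
  split_ifs with hin hmid
  · rw [arcHalfAngle_eq_pi hd hρ0 (by linarith [(hle hρ0.le (by linarith)).1 hin.2])]
    field_simp
  · rfl
  · have hz₀ : √(R₂ ^ 2 + h ^ 2) ≤ √(ρ ^ 2 + h ^ 2) := (hle hR₂.le hρ0.le).2 hρ
    have hz₁ : √((R₁ - d) ^ 2 + h ^ 2) < √(ρ ^ 2 + h ^ 2) := lt_of_not_ge fun h' => hin ⟨hz₀, h'⟩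
    have hz₂ : √((R₁ + d) ^ 2 + h ^ 2) < √(ρ ^ 2 + h ^ 2) := lt_of_not_ge fun h' => hmid ⟨hz₁, h'⟩
    rw [arcHalfAngle_eq_zero hd hρ0 (by linarith) ((hle (by linarith) hρ0.le).1 hz₂.le), mul_zero]

theorem lintegral_Iic_zcDensity_of_le {R₁ R₂ d h a : ℝ} (hR₂ : 0 ≤ R₂) (hsub : R₂ + d ≤ R₁)
    (ha : a ≤ √(R₂ ^ 2 + h ^ 2)) :
    ∫⁻ z in Iic a, ENNReal.ofReal (zcDensity R₁ R₂ d h z) = 0 := by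
  refine nonpos_iff_eq_zero.1 ((lintegral_mono_set (Iic_subset_Iic.2 ha)).trans_eq ?_)
  rw [setLIntegral_congr Iio_ae_eq_Iic.symm]
  refine (setLIntegral_congr_fun measurableSet_Iio fun z hz => ?_).trans lintegral_zero
  rw [zcDensity_eq_zero_of_lt hR₂ hsub hz, ENNReal.ofReal_zero]

theorem lintegral_Iic_sqrt_zcDensity {R₁ R₂ d h r : ℝ} (hR₂ : 0 < R₂) (hd : 0 < d)
    (hsub : R₂ + d ≤ R₁) (hr : R₂ ≤ r) :
    ∫⁻ z in Iic √(r ^ 2 + h ^ 2), ENNReal.ofReal (zcDensity R₁ R₂ d h z)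
      = ENNReal.ofReal (π * (R₁ ^ 2 - R₂ ^ 2))⁻¹ *
          ∫⁻ ρ in Ioc R₂ r, ENNReal.ofReal (2 * ρ * arcHalfAngle R₁ d ρ) := by
  have hz₀ : √(R₂ ^ 2 + h ^ 2) ≤ √(r ^ 2 + h ^ 2) :=
    (sqrt_sq_add_sq_le_sqrt_sq_add_sq_iff h hR₂.le (hR₂.le.trans hr)).2 hr
  rw [← Iic_union_Ioc_eq_Iic hz₀, lintegral_union measurableSet_Ioc (Iic_disjoint_Ioc le_rfl),
    lintegral_Iic_zcDensity_of_le hR₂.le hsub le_rfl, zero_add,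
    lintegral_Ioc_sqrt_sq_add_sq hR₂.le hr, ← lintegral_const_mul' _ _ ENNReal.ofReal_ne_top]
  refine setLIntegral_congr_fun measurableSet_Ioc fun ρ hρ => ?_
  have hρ0 : 0 < ρ := hR₂.trans hρ.1
  have hsq : 0 < √(ρ ^ 2 + h ^ 2) := sqrt_pos.2 (by positivity)
  rw [zcDensity_sqrt_sq_add_sq hR₂ hd hsub hρ.1.le, ← ENNReal.ofReal_mul (by positivity),
    ← ENNReal.ofReal_mul (inv_nonneg.2 (mul_nonneg pi_pos.le (by nlinarith)))]
  congr 1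
  field_simp

theorem disk_subset_disk {R₁ R₂ d : ℝ} (hR₂ : 0 ≤ R₂) (hd : 0 ≤ d) (hsub : R₂ + d ≤ R₁) :
    {x : ℝ × ℝ | (x.1 - d) ^ 2 + x.2 ^ 2 ≤ R₂ ^ 2} ⊆ {x : ℝ × ℝ | x.1 ^ 2 + x.2 ^ 2 ≤ R₁ ^ 2} := by
  intro p (hp : (p.1 - d) ^ 2 + p.2 ^ 2 ≤ R₂ ^ 2)
  have hu : p.1 - d ≤ R₂ := by nlinarith [sq_nonneg p.2]
  show p.1 ^ 2 + p.2 ^ 2 ≤ R₁ ^ 2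
  nlinarith [mul_le_mul_of_nonneg_left hu (by linarith : (0:ℝ) ≤ 2 * d)]

theorem volume_disk_sdiff_disk {R₁ R₂ d : ℝ} (hR₂ : 0 ≤ R₂) (hd : 0 ≤ d) (hsub : R₂ + d ≤ R₁) :
    volume ({x : ℝ × ℝ | x.1 ^ 2 + x.2 ^ 2 ≤ R₁ ^ 2} \
      {x : ℝ × ℝ | (x.1 - d) ^ 2 + x.2 ^ 2 ≤ R₂ ^ 2}) = ENNReal.ofReal (π * (R₁ ^ 2 - R₂ ^ 2)) := by
  have hD₁ := volume_disk 0 (by linarith : 0 ≤ R₁)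
  have hD₂ := volume_disk (d, 0) hR₂
  simp only [Prod.fst_zero, Prod.snd_zero, sub_zero] at hD₁ hD₂
  rw [measure_sdiff (disk_subset_disk hR₂ hd hsub) (by measurability) (by simp [hD₂]), hD₁, hD₂,
    ← ENNReal.ofReal_sub _ (by positivity)]
  ring_nf

theorem disk_sdiff_disk_inter_preimage_Iic_sqrt {R₁ R₂ d h r : ℝ} :
    ({x : ℝ × ℝ | x.1 ^ 2 + x.2 ^ 2 ≤ R₁ ^ 2} \ {x : ℝ × ℝ | (x.1 - d) ^ 2 + x.2 ^ 2 ≤ R₂ ^ 2}) ∩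
        (fun x => √((x.1 - d) ^ 2 + x.2 ^ 2 + h ^ 2)) ⁻¹' Iic √(r ^ 2 + h ^ 2)
      = {p : ℝ × ℝ | R₂ ^ 2 < (p.1 - d) ^ 2 + p.2 ^ 2 ∧ (p.1 - d) ^ 2 + p.2 ^ 2 ≤ r ^ 2 ∧
          p.1 ^ 2 + p.2 ^ 2 ≤ R₁ ^ 2} := by
  ext p
  simp only [mem_inter_iff, mem_sdiff, mem_ofPred_eq, mem_preimage, mem_Iic, not_le,
    sqrt_le_sqrt_iff (by positivity : 0 ≤ r ^ 2 + h ^ 2), add_le_add_iff_right]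
  tauto

theorem exists_eq_sqrt_sq_add_sq {R h a : ℝ} (hR : 0 ≤ R) (ha : √(R ^ 2 + h ^ 2) ≤ a) :
    ∃ r, R ≤ r ∧ a = √(r ^ 2 + h ^ 2) := by
  have ha0 : 0 ≤ a := (sqrt_nonneg _).trans ha
  rw [sqrt_le_left ha0] at ha
  have hpos : 0 ≤ a ^ 2 - h ^ 2 := by nlinarith [sq_nonneg R]
  refine ⟨√(a ^ 2 - h ^ 2), (le_sqrt hR hpos).2 (by linarith), ?_⟩
  rw [sq_sqrt hpos, sub_add_cancel, sqrt_sq ha0]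

theorem stmt10_general (R₁ R₂ d h : ℝ) (hR₂ : 0 < R₂) (hd : 0 < d)
    (hsub : R₂ + d < R₁)
    (A : Set (ℝ × ℝ))
    (hA : A = {x : ℝ × ℝ | x.1 ^ 2 + x.2 ^ 2 ≤ R₁ ^ 2} \
              {x : ℝ × ℝ | (x.1 - d) ^ 2 + x.2 ^ 2 ≤ R₂ ^ 2})
    (P : Measure (ℝ × ℝ)) (hP : P = (volume A)⁻¹ • volume.restrict A) :
    P.map (fun x => Real.sqrt ((x.1 - d) ^ 2 + x.2 ^ 2 + h ^ 2))
      = volume.withDensity (fun z =>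
        ENNReal.ofReal (
          if Real.sqrt (R₂ ^ 2 + h ^ 2) ≤ z ∧ z ≤ Real.sqrt ((R₁ - d) ^ 2 + h ^ 2) then
            2 * z / (R₁ ^ 2 - R₂ ^ 2)
          else if Real.sqrt ((R₁ - d) ^ 2 + h ^ 2) < z ∧ z ≤ Real.sqrt ((R₁ + d) ^ 2 + h ^ 2) then
            2 * z / (Real.pi * (R₁ ^ 2 - R₂ ^ 2)) *
              Real.arccos ((d ^ 2 + z ^ 2 - h ^ 2 - R₁ ^ 2) / (2 * d * Real.sqrt (z ^ 2 - h ^ 2)))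
          else 0)) := by
  subst hA hP
  change volume[|_].map _ = volume.withDensity fun z => ENNReal.ofReal (zcDensity R₁ R₂ d h z)
  refine Measure.ext_of_Iic _ _ fun a => ?_
  rw [Measure.map_apply (by fun_prop) measurableSet_Iic, cond_apply (by measurability),
    withDensity_apply _ measurableSet_Iic,
    volume_disk_sdiff_disk hR₂.le hd.le hsub.le]
  rcases lt_or_ge a √(R₂ ^ 2 + h ^ 2) with ha | ha
  · rw [lintegral_Iic_zcDensity_of_le hR₂.le hsub.le ha.le]
    refine mul_eq_zero_of_right _ (measure_mono_null (fun p ⟨⟨_, hp⟩, hpa⟩ => ?_) measure_empty)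
    simp only [mem_ofPred_eq, not_le, mem_preimage, mem_Iic] at hp hpa
    exact (ha.trans_le' (hpa.trans' (sqrt_le_sqrt (by linarith)))).false
  · obtain ⟨r, hr, rfl⟩ := exists_eq_sqrt_sq_add_sq hR₂.le ha
    rw [lintegral_Iic_sqrt_zcDensity hR₂ hd hsub.le hr, disk_sdiff_disk_inter_preimage_Iic_sqrt,
      volume_annulus_inter_disk hd hR₂.le (hR₂.le.trans hr),
      ENNReal.ofReal_inv_of_pos (mul_pos pi_pos (by nlinarith))]

/-- With `P` uniform on `S₁ \ S₂` and the ABS at height `h` above `C = (d,0)`,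
the 3-D distance `Z_c = √(|P−C|² + h²)` has density `2z/(R₁²−R₂²)` on
`[√(R₂²+h²), √((R₁−d)²+h²)]` and
`(2z/(π(R₁²−R₂²)))·arccos((d²+z²−h²−R₁²)/(2d√(z²−h²)))` on
`(√((R₁−d)²+h²), √((R₁+d)²+h²)]` (using `arcsec x = arccos (1/x)`). -/
theorem stmt10 (R₁ R₂ d h : ℝ) (hR₂ : 0 < R₂) (hd : 0 < d) (hh : 0 < h)
    (hsub : R₂ + d < R₁)
    (A : Set (ℝ × ℝ))
    (hA : A = {x : ℝ × ℝ | x.1 ^ 2 + x.2 ^ 2 ≤ R₁ ^ 2} \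
              {x : ℝ × ℝ | (x.1 - d) ^ 2 + x.2 ^ 2 ≤ R₂ ^ 2})
    (P : Measure (ℝ × ℝ)) (hP : P = (volume A)⁻¹ • volume.restrict A) :
    P.map (fun x => Real.sqrt ((x.1 - d) ^ 2 + x.2 ^ 2 + h ^ 2))
      = volume.withDensity (fun z =>
        ENNReal.ofReal (
          if Real.sqrt (R₂ ^ 2 + h ^ 2) ≤ z ∧ z ≤ Real.sqrt ((R₁ - d) ^ 2 + h ^ 2) then
            2 * z / (R₁ ^ 2 - R₂ ^ 2)
          else if Real.sqrt ((R₁ - d) ^ 2 + h ^ 2) < z ∧ z ≤ Real.sqrt ((R₁ + d) ^ 2 + h ^ 2) then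
            2 * z / (Real.pi * (R₁ ^ 2 - R₂ ^ 2)) *
              Real.arccos ((d ^ 2 + z ^ 2 - h ^ 2 - R₁ ^ 2) / (2 * d * Real.sqrt (z ^ 2 - h ^ 2)))
          else 0)) :=
  stmt10_general R₁ R₂ d h hR₂ hd hsub A hA P hP
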